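/- In a two-parameter restricted latent class model with Γ ∈ {0,1}^{J×A} and θ_j^+ > θ_j^- for each item j, suppose p, p̄ ∈ ℝ^A satisfy Σ_α (∏_{j: r_j=1} θ_{j,α}) p_α = Σ_α (∏_{j: r_j=1} θ_{j,α}) p̄_α for every r ∈ {0,1}^J. Then for every equivalence class C of the relation 'equal Γ-columns', Σ_{α ∈ C} p_α = Σ_{α ∈ C} p̄_α. That is, the grouped proportion parameters ν over Γ-induced equivalence classes are identifiable. -/

import Mathlib

/-!
Let `q = p - p̄`. The hypothesis says that `q` is annihilated by every moment `∏_{j ∈ t} θ_{j,α}`,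
hence, expanding the product, by `∏_j (θ_{j,α} - s_j)` for any constants `s_j`. Choosing `s_j` to be
the value of item `j` *not* taken by a fixed class `C` makes this product vanish off `C` and equal a
nonzero constant on `C`, so `∑_{α ∈ C} q α = 0`.
-/

open Finset

theorem sum_prod_sub_mul_eq_zero {ι A R : Type*} [Fintype ι] [Fintype A] [CommRing R]
    (a : A → ι → R) (q : A → R) (h : ∀ t : Finset ι, ∑ α, (∏ j ∈ t, a α j) * q α = 0)
    (s : ι → R) :
    ∑ α, (∏ j, (a α j - s j)) * q α = 0 := by
  classical
  simp_rw [sub_eq_add_neg, prod_add, sum_mul]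
  rw [sum_comm]
  refine sum_eq_zero fun t _ => ?_
  simp_rw [mul_right_comm _ _ (q _)]
  rw [← sum_mul, h t, zero_mul]

theorem prod_sub_not_eq_ite {ι A R : Type*} [Fintype ι] [CommRing R]
    (f : ι → Bool → R) (Γ : ι → A → Bool) (α₀ α : A) :
    ∏ j, (f j (Γ j α) - f j (!Γ j α₀)) =
      if ∀ j, Γ j α = Γ j α₀ then ∏ j, (f j (Γ j α₀) - f j (!Γ j α₀)) else 0 := by
  split_ifs with hα
  · simp only [hα]
  · push Not at hα
    obtain ⟨j, hj⟩ := hα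
    exact prod_eq_zero (mem_univ j) (by rw [Bool.eq_not_iff.mpr hj, sub_self])

theorem sum_filter_eq_zero_of_sum_prod_mul_eq_zero {ι A R : Type*} [Fintype ι] [Fintype A]
    [CommRing R] [IsDomain R] (f : ι → Bool → R) (hf : ∀ j, f j true ≠ f j false)
    (Γ : ι → A → Bool) (q : A → R)
    (h : ∀ t : Finset ι, ∑ α, (∏ j ∈ t, f j (Γ j α)) * q α = 0) (α₀ : A) :
    ∑ α ∈ univ.filter (fun α => ∀ j, Γ j α = Γ j α₀), q α = 0 := by
  have hc : ∏ j, (f j (Γ j α₀) - f j (!Γ j α₀)) ≠ 0 :=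
    prod_ne_zero_iff.mpr fun j _ => sub_ne_zero.mpr (by cases Γ j α₀ <;> simp [hf j, (hf j).symm])
  have hs := sum_prod_sub_mul_eq_zero (fun α j => f j (Γ j α)) q h (fun j => f j (!Γ j α₀))
  rw [sum_congr rfl fun α _ => by rw [prod_sub_not_eq_ite, ite_mul, zero_mul], ← sum_filter,
    ← mul_sum] at hs
  exact (mul_eq_zero.mp hs).resolve_left hc

/-- In a two-parameter restricted latent class model, equality of response
distributions implies equality of the grouped proportion parameters over
Γ-induced equivalence classes. -/
theorem stmt4 {J : ℕ} {A : Type*} [Fintype A]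
    (Γ : Fin J → A → Bool) (θp θm : Fin J → ℝ)
    (hθ : ∀ j, θm j < θp j)
    (p pbar : A → ℝ)
    (h : ∀ r : Fin J → Bool,
      ∑ α, (∏ j, if r j then (if Γ j α then θp j else θm j) else 1) * p α =
      ∑ α, (∏ j, if r j then (if Γ j α then θp j else θm j) else 1) * pbar α) :
    ∀ α : A,
      ∑ α' ∈ Finset.univ.filter (fun α' => ∀ j, Γ j α' = Γ j α), p α' =
      ∑ α' ∈ Finset.univ.filter (fun α' => ∀ j, Γ j α' = Γ j α), pbar α' := by
  intro α
  have hmoments : ∀ t : Finset (Fin J),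
      ∑ α', (∏ j ∈ t, if Γ j α' then θp j else θm j) * (p α' - pbar α') = 0 := by
    intro t
    have ht := h (fun j => decide (j ∈ t))
    simp only [decide_eq_true_eq, ← prod_filter, filter_mem_eq_inter, univ_inter] at ht
    simp only [mul_sub, sum_sub_distrib, ht, sub_self]
  have hclass := sum_filter_eq_zero_of_sum_prod_mul_eq_zero (fun j b => if b then θp j else θm j)
    (fun j => by simpa using (hθ j).ne') Γ _ hmoments α
  rw [sum_sub_distrib, sub_eq_zero] at hclass
  convert hclass
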